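/- Let Σ be a complete fan in R^2 with rays ρ_0,...,ρ_k whose primitive generators span Z^2 over Z. Then the sum of the lattice ideals of the perpendicular sublattices of the rays, J_{ρ_0} + ... + J_{ρ_k} in Z[α^{±1},β^{±1}], equals the ideal ⟨1-α, 1-β⟩. -/
import Mathlib


/-- The Laurent monomial `x^w` in `ℤ[α^{±1},β^{±1}]`, modelled as the
group algebra `AddMonoidAlgebra ℤ (Fin 2 → ℤ)`. -/
noncomputable def Lmon (s : ℕ) (w : Fin s → ℤ) : AddMonoidAlgebra ℤ (Fin s → ℤ) :=
  AddMonoidAlgebra.single w 1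

lemma Lmon_mul (s : ℕ) (u w : Fin s → ℤ) : Lmon s u * Lmon s w = Lmon s (u + w) := by
  simp [Lmon, AddMonoidAlgebra.single_mul_single]

lemma Lmon_zero (s : ℕ) : Lmon s 0 = 1 := rfl

/-- The set of `w` with `1 - x^w ∈ J` is an additive subgroup. -/
def monSub (J : Ideal (AddMonoidAlgebra ℤ (Fin 2 → ℤ))) : AddSubgroup (Fin 2 → ℤ) where
  carrier := {w | 1 - Lmon 2 w ∈ J}
  zero_mem' := by simp [Lmon_zero]
  add_mem' := by
    intro u w hu hw
    have h : 1 - Lmon 2 (u + w) = (1 - Lmon 2 u) + Lmon 2 u * (1 - Lmon 2 w) := by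
      rw [mul_sub, Lmon_mul]; ring
    simp only [Set.mem_setOf_eq] at *
    rw [h]
    exact J.add_mem hu (J.mul_mem_left _ hw)
  neg_mem' := by
    intro u hu
    have hm : Lmon 2 (-u) * Lmon 2 u = 1 := by rw [Lmon_mul, neg_add_cancel, Lmon_zero]
    have h : 1 - Lmon 2 (-u) = (-Lmon 2 (-u)) * (1 - Lmon 2 u) := by
      linear_combination -hm
    simp only [Set.mem_setOf_eq] at *
    rw [h]
    exact J.mul_mem_left _ hu

lemma mem_of_span (J : Ideal (AddMonoidAlgebra ℤ (Fin 2 → ℤ))) (S : Set (Fin 2 → ℤ))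
    (hS : ∀ u ∈ S, 1 - Lmon 2 u ∈ J) (w : Fin 2 → ℤ) (hw : w ∈ Submodule.span ℤ S) :
    1 - Lmon 2 w ∈ J := by
  have : Submodule.span ℤ S ≤ (monSub J).toIntSubmodule := Submodule.span_le.mpr hS
  exact this hw

/-- Rotation by 90° as a linear map on `ℤ²`. -/
def rotm : (Fin 2 → ℤ) →ₗ[ℤ] (Fin 2 → ℤ) where
  toFun w := ![-w 1, w 0]
  map_add' := by
    intro x y; funext j; fin_cases j <;> simp <;> ring
  map_smul' := by
    intro c x; funext j; fin_cases j <;> simp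

/-- For a complete fan in `ℝ²` with rays generated by primitive vectors
`v 0, …, v k` which span `ℤ²` over `ℤ`, the sum of the lattice ideals
`J_{ρ_i} = ⟨1 - x^{ν_i}⟩` of the perpendicular sublattices of the rays (with
`ν i` a primitive generator orthogonal to `v i`) equals `⟨1-α, 1-β⟩` in
`ℤ[α^{±1},β^{±1}]`. -/
theorem complete_fan_sum_ray_ideals (k : ℕ) (v ν : Fin (k + 1) → Fin 2 → ℤ)
    (hprim : ∀ i, IsCoprime (v i 0) (v i 1))
    (hcomplete : ∀ x : Fin 2 → ℝ, ∃ (i j : Fin (k + 1)) (a b : ℝ),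
      0 ≤ a ∧ 0 ≤ b ∧ ∀ t, x t = a * (v i t : ℝ) + b * (v j t : ℝ))
    (hperp : ∀ i, ν i 0 * v i 0 + ν i 1 * v i 1 = 0)
    (hνprim : ∀ i, IsCoprime (ν i 0) (ν i 1))
    (hspan : Submodule.span ℤ (Set.range v) = ⊤) :
    (∑ i, Ideal.span {1 - Lmon 2 (ν i)}) =
      Ideal.span {1 - Lmon 2 (Pi.single 0 1), 1 - Lmon 2 (Pi.single 1 1)} := by
  set J : Ideal (AddMonoidAlgebra ℤ (Fin 2 → ℤ)) := ∑ i, Ideal.span {1 - Lmon 2 (ν i)} with hJ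
  set I : Ideal (AddMonoidAlgebra ℤ (Fin 2 → ℤ)) :=
    Ideal.span {1 - Lmon 2 (Pi.single 0 1), 1 - Lmon 2 (Pi.single 1 1)} with hI
  -- every 1 - x^w lies in I
  have hItop : ∀ w : Fin 2 → ℤ, 1 - Lmon 2 w ∈ I := by
    intro w
    apply mem_of_span I {Pi.single 0 1, Pi.single 1 1}
    · intro u hu
      rcases hu with h | h <;> subst h <;> exact Ideal.subset_span (by simp)
    · have : w = w 0 • (Pi.single 0 1 : Fin 2 → ℤ) + w 1 • Pi.single 1 1 := by
        funext j; fin_cases j <;> simp [Pi.single_apply]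
      rw [this]
      exact Submodule.add_mem _
        (Submodule.smul_mem _ _ (Submodule.subset_span (by simp)))
        (Submodule.smul_mem _ _ (Submodule.subset_span (by simp)))
  -- each generator of J lies in J
  have hgen : ∀ i, 1 - Lmon 2 (ν i) ∈ J := by
    intro i
    have h1 : Ideal.span {1 - Lmon 2 (ν i)} ≤ J := by
      rw [hJ, Ideal.sum_eq_sup]
      exact Finset.le_sup (f := fun i => Ideal.span {1 - Lmon 2 (ν i)}) (Finset.mem_univ i)
    exact h1 (Ideal.subset_span rfl)
  -- rot(v i) is an integer multiple of ν i, hence in monSub J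
  have hrot : ∀ i, rotm (v i) ∈ monSub J := by
    intro i
    obtain ⟨a, b, hab⟩ := hνprim i
    have hc : (a * (-v i 1) + b * (v i 0)) • ν i = rotm (v i) := by
      funext j
      fin_cases j <;> simp [rotm, Pi.smul_apply, smul_eq_mul]
      · linear_combination (-(v i 1)) * hab + b * hperp i
      · linear_combination (v i 0) * hab - a * hperp i
    rw [← hc]
    exact AddSubgroup.zsmul_mem _ (hgen i) _
  -- hence every w is in monSub J, i.e. 1 - x^w ∈ J
  have hJtop : ∀ w : Fin 2 → ℤ, 1 - Lmon 2 w ∈ J := by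
    intro w
    apply mem_of_span J (Set.range (fun i => rotm (v i)))
    · rintro u ⟨i, rfl⟩; exact hrot i
    · have hsp : Submodule.span ℤ (Set.range (fun i => rotm (v i))) =
          Submodule.map rotm (Submodule.span ℤ (Set.range v)) := by
        rw [Submodule.map_span, ← Set.range_comp]; rfl
      rw [hsp, hspan]
      refine ⟨![w 1, -w 0], Submodule.mem_top, ?_⟩
      funext j; fin_cases j <;> simp [rotm]
  apply le_antisymm
  · rw [hJ, Ideal.sum_eq_sup]
    apply Finset.sup_le
    intro i _
    rw [Ideal.span_le]
    rintro x rfl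
    exact hItop (ν i)
  · rw [hI, Ideal.span_le]
    rintro x (h | h) <;> subst h
    · exact hJtop _
    · exact hJtop _
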